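/- Let v ∈ ℤ³ be primitive with d² ∣ ‖v‖², and set Γ(v,d) = {a ∈ ℤ³ : d ∣ a × v and d² ∣ (a × v) × v}. If a, b ∈ Γ(v,d), then d divides a × b and (a × b)/d ∈ Γ(v,d). -/

import Mathlib

/-! Choose `u` with `u ⬝ v = 1` (possible as `v` is primitive). Then `a = (a ⬝ u) v + u × (a × v)`,
so every `a ∈ Γ(v,d)` is `l v + d a₁` with `a₁ = u × ((a × v)/d)`, and the second condition of
`Γ(v,d)` makes `d ∣ a₁ ⬝ v`. For `b = m v + d b₁` likewise,
`a × b = d (l v × b₁ - m v × a₁ + d a₁ × b₁)`. The vectors `v × b₁`, `v × a₁` lie in `Γ(v,d)`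
because `d² ∣ v ⬝ v`, and `d (a₁ × b₁)` does because `d ∣ det(a₁, b₁, v)`, which is
`det(a₁, b₁, v) (u ⬝ v)`, a combination of `a₁ ⬝ v`, `b₁ ⬝ v` and `v ⬝ v`.
-/

def dot3 (a b : Fin 3 → ℤ) : ℤ := a 0 * b 0 + a 1 * b 1 + a 2 * b 2

def cross3 (a b : Fin 3 → ℤ) : Fin 3 → ℤ :=
  ![a 1 * b 2 - a 2 * b 1, a 2 * b 0 - a 0 * b 2, a 0 * b 1 - a 1 * b 0]

lemma cross3_add_left (a b v : Fin 3 → ℤ) :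
    cross3 (a + b) v = cross3 a v + cross3 b v := by
  funext i; fin_cases i <;> simp [cross3] <;> ring

lemma cross3_zero_left (v : Fin 3 → ℤ) : cross3 0 v = 0 := by
  funext i; fin_cases i <;> simp [cross3]

lemma cross3_neg_left (a v : Fin 3 → ℤ) : cross3 (-a) v = -(cross3 a v) := by
  funext i; fin_cases i <;> simp [cross3] <;> ring

/-- The lattice `v^⊥` of integer vectors orthogonal to `v`. -/
def perpSub (v : Fin 3 → ℤ) : AddSubgroup (Fin 3 → ℤ) where
  carrier := {a | dot3 a v = 0}
  zero_mem' := by simp [dot3]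
  add_mem' := by
    intro a b ha hb
    simp only [Set.mem_setOf_eq, dot3, Pi.add_apply] at *
    linarith
  neg_mem' := by
    intro a ha
    simp only [Set.mem_setOf_eq, dot3, Pi.neg_apply] at *
    linarith

/-- The subgroup `M(v,d) = {a ∈ v^⊥ : d ∣ a × v}`. -/
def MSub (v : Fin 3 → ℤ) (d : ℤ) : AddSubgroup (Fin 3 → ℤ) where
  carrier := {a | dot3 a v = 0 ∧ ∀ i, d ∣ cross3 a v i}
  zero_mem' := ⟨by simp [dot3], by intro i; rw [cross3_zero_left]; simp⟩
  add_mem' := by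
    rintro a b ⟨ha, ha'⟩ ⟨hb, hb'⟩
    refine ⟨?_, ?_⟩
    · simp only [dot3, Pi.add_apply] at *; linarith
    · intro i; rw [cross3_add_left]; exact dvd_add (ha' i) (hb' i)
  neg_mem' := by
    rintro a ⟨ha, ha'⟩
    refine ⟨?_, ?_⟩
    · simp only [dot3, Pi.neg_apply] at *; linarith
    · intro i; rw [cross3_neg_left]; simpa using (ha' i).neg_right

/-- The subgroup `Γ(v,d) = {a : d ∣ a × v, d² ∣ (a × v) × v}`. -/
def GammaSub (v : Fin 3 → ℤ) (d : ℤ) : AddSubgroup (Fin 3 → ℤ) where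
  carrier := {a | (∀ i, d ∣ cross3 a v i) ∧ ∀ i, d^2 ∣ cross3 (cross3 a v) v i}
  zero_mem' := by
    constructor <;> intro i <;> rw [cross3_zero_left] <;> simp [cross3_zero_left]
  add_mem' := by
    rintro a b ⟨ha, ha'⟩ ⟨hb, hb'⟩
    refine ⟨fun i => ?_, fun i => ?_⟩
    · rw [cross3_add_left]; exact dvd_add (ha i) (hb i)
    · rw [cross3_add_left, cross3_add_left]; exact dvd_add (ha' i) (hb' i)
  neg_mem' := by
    rintro a ⟨ha, ha'⟩
    refine ⟨fun i => ?_, fun i => ?_⟩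
    · rw [cross3_neg_left]; simpa using (ha i).neg_right
    · rw [cross3_neg_left, cross3_neg_left]; simpa using (ha' i).neg_right

def Primitive (v : Fin 3 → ℤ) : Prop := Int.gcd (Int.gcd (v 0) (v 1)) (v 2) = 1

open Matrix

lemma cross3_eq_crossProduct (x y : Fin 3 → ℤ) : cross3 x y = x ⨯₃ y := rfl

lemma dot3_eq_dotProduct (x y : Fin 3 → ℤ) : dot3 x y = x ⬝ᵥ y := (vec3_dotProduct x y).symm

lemma cross3_cross3_left (x y z : Fin 3 → ℤ) :
    cross3 (cross3 x y) z = dot3 x z • y - dot3 y z • x := by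
  simp only [cross3_eq_crossProduct, dot3_eq_dotProduct]
  exact cross_cross_eq_smul_sub_smul x y z

lemma cross3_cross3_right (x y z : Fin 3 → ℤ) :
    cross3 x (cross3 y z) = dot3 x z • y - dot3 y x • z := by
  simp only [cross3_eq_crossProduct, dot3_eq_dotProduct]
  exact cross_cross_eq_smul_sub_smul' x y z

lemma cross3_smul_left (k : ℤ) (x y : Fin 3 → ℤ) : cross3 (k • x) y = k • cross3 x y := by
  simp only [cross3_eq_crossProduct, map_smul, LinearMap.smul_apply]

lemma cross3_smul_right (k : ℤ) (x y : Fin 3 → ℤ) : cross3 x (k • y) = k • cross3 x y := by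
  simp only [cross3_eq_crossProduct, map_smul]

lemma cross3_anticomm (x y : Fin 3 → ℤ) : cross3 y x = -cross3 x y :=
  (cross_anticomm x y).symm

lemma dot3_cross3_self_left (x y : Fin 3 → ℤ) : dot3 (cross3 x y) x = 0 := by
  rw [dot3_eq_dotProduct, dotProduct_comm]
  exact dot_self_cross x y

lemma dot3_cross3_eq_dot3_cross3 (x y z : Fin 3 → ℤ) :
    dot3 (cross3 x y) z = dot3 x (cross3 y z) := by
  simp only [cross3_eq_crossProduct, dot3_eq_dotProduct]
  rw [dotProduct_comm, triple_product_permutation]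

-- `det(a, b, v) x = (a ⬝ x) (b × v) + (b ⬝ x) (v × a) + (v ⬝ x) (a × b)` at `x = v`, dotted with `u`.
lemma dot3_cross3_mul_dot3 (a b v u : Fin 3 → ℤ) :
    dot3 (cross3 a b) v * dot3 u v = dot3 a v * dot3 (cross3 b v) u
      + dot3 b v * dot3 (cross3 v a) u + dot3 v v * dot3 (cross3 a b) u := by
  simp only [cross3, dot3, cons_val_zero, cons_val_one, cons_val_two, head_cons, tail_cons]
  ring

lemma Primitive.exists_dot3_eq_one {v : Fin 3 → ℤ} (hv : Primitive v) :
    ∃ u : Fin 3 → ℤ, dot3 u v = 1 := by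
  obtain ⟨x, y, hxy⟩ := Int.isCoprime_iff_gcd_eq_one.mpr hv
  refine ⟨![Int.gcdA (v 0) (v 1) * x, Int.gcdB (v 0) (v 1) * x, y], ?_⟩
  simp only [dot3, cons_val_zero, cons_val_one, cons_val_two, head_cons, tail_cons]
  linear_combination hxy - x * Int.gcd_eq_gcd_ab (v 0) (v 1)

lemma dvd_dot3_of_forall_dvd {d : ℤ} (x : Fin 3 → ℤ) {y : Fin 3 → ℤ} (hy : ∀ i, d ∣ y i) :
    d ∣ dot3 x y :=
  dvd_add (dvd_add ((hy 0).mul_left _) ((hy 1).mul_left _)) ((hy 2).mul_left _)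

lemma eq_smul_add_cross3_cross3 {u v : Fin 3 → ℤ} (hu : dot3 u v = 1) (a : Fin 3 → ℤ) :
    a = dot3 a u • v + cross3 u (cross3 a v) := by
  rw [cross3_cross3_right, hu, one_smul, add_sub_cancel]

lemma dvd_dot3_cross3 {v a b : Fin 3 → ℤ} (hv : Primitive v) {d : ℤ} (hd : d ∣ dot3 v v)
    (ha : d ∣ dot3 a v) (hb : d ∣ dot3 b v) : d ∣ dot3 (cross3 a b) v := by
  obtain ⟨u, hu⟩ := hv.exists_dot3_eq_one
  have h := dot3_cross3_mul_dot3 a b v u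
  rw [hu, mul_one] at h
  rw [h]
  exact dvd_add (dvd_add (ha.mul_right _) (hb.mul_right _)) (hd.mul_right _)

lemma exists_eq_smul_add_smul_of_mem_GammaSub {v : Fin 3 → ℤ} (hv : Primitive v) {d : ℤ}
    {a : Fin 3 → ℤ} (ha : a ∈ GammaSub v d) :
    ∃ (l : ℤ) (a₁ : Fin 3 → ℤ), a = l • v + d • a₁ ∧ d ∣ dot3 a₁ v := by
  obtain ⟨u, hu⟩ := hv.exists_dot3_eq_one
  obtain ⟨hav, havv⟩ := ha
  rcases eq_or_ne d 0 with rfl | hd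
  · have hav0 : cross3 a v = 0 := funext fun i => zero_dvd_iff.mp (hav i)
    refine ⟨dot3 a u, 0, ?_, by simp [dot3]⟩
    have h := eq_smul_add_cross3_cross3 hu a
    rw [hav0, cross3_anticomm, cross3_zero_left, neg_zero] at h
    rwa [smul_zero]
  · choose c hc using hav
    have hac : cross3 a v = d • c := funext hc
    have hcv : ∀ i, d ∣ cross3 c v i := fun i => by
      have h := havv i
      rw [hac, cross3_smul_left, Pi.smul_apply, smul_eq_mul, pow_two] at h
      exact (mul_dvd_mul_iff_left hd).mp h
    refine ⟨dot3 a u, cross3 u c, ?_, ?_⟩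
    · rw [← cross3_smul_right, ← hac]
      exact eq_smul_add_cross3_cross3 hu a
    · rw [dot3_cross3_eq_dot3_cross3]
      exact dvd_dot3_of_forall_dvd u hcv

lemma cross3_mem_GammaSub {v b : Fin 3 → ℤ} {d : ℤ} (hv : d ^ 2 ∣ dot3 v v)
    (hb : d ∣ dot3 b v) : cross3 v b ∈ GammaSub v d := by
  have hv' : d ∣ dot3 v v := (dvd_pow_self d two_ne_zero).trans hv
  refine ⟨fun i => ?_, fun i => ?_⟩
  · rw [cross3_cross3_left]
    exact dvd_sub (hv'.mul_right _) (hb.mul_right _)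
  · rw [cross3_cross3_left (cross3 v b), dot3_cross3_self_left, zero_smul, zero_sub,
      cross3_anticomm b v, smul_neg, neg_neg]
    exact hv.mul_right _

lemma smul_mem_GammaSub {v c : Fin 3 → ℤ} {d : ℤ} (hv : d ∣ dot3 v v) (hc : d ∣ dot3 c v) :
    d • c ∈ GammaSub v d := by
  refine ⟨fun i => ?_, fun i => ?_⟩
  · rw [cross3_smul_left]
    exact dvd_mul_right _ _
  · rw [cross3_smul_left, cross3_smul_left, cross3_cross3_left, pow_two]
    exact mul_dvd_mul_left d (dvd_sub (hc.mul_right _) (hv.mul_right _))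

lemma cross3_smul_add_smul (l m d : ℤ) (v a b : Fin 3 → ℤ) :
    cross3 (l • v + d • a) (m • v + d • b)
      = d • (l • cross3 v b - m • cross3 v a + d • cross3 a b) := by
  simp only [cross3_eq_crossProduct, map_add, map_smul, LinearMap.add_apply,
    LinearMap.smul_apply, cross_self, smul_zero, ← cross_anticomm a v]
  module

/-- For `a, b ∈ Γ(v,d)`, the cross product `a × b` is divisible by `d` and
`(a × b)/d ∈ Γ(v,d)`. -/
theorem Gamma_closed_under_scaled_cross (v : Fin 3 → ℤ) (hv : Primitive v)
    (d : ℤ) (hdvd : d^2 ∣ dot3 v v) (a b : Fin 3 → ℤ)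
    (ha : a ∈ GammaSub v d) (hb : b ∈ GammaSub v d) :
    ∃ w ∈ GammaSub v d, d • w = cross3 a b := by
  obtain ⟨l, a₁, rfl, ha₁⟩ := exists_eq_smul_add_smul_of_mem_GammaSub hv ha
  obtain ⟨m, b₁, rfl, hb₁⟩ := exists_eq_smul_add_smul_of_mem_GammaSub hv hb
  have hd : d ∣ dot3 v v := (dvd_pow_self d two_ne_zero).trans hdvd
  refine ⟨l • cross3 v b₁ - m • cross3 v a₁ + d • cross3 a₁ b₁, ?_,
    (cross3_smul_add_smul l m d v a₁ b₁).symm⟩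
  exact add_mem
    (sub_mem (zsmul_mem (cross3_mem_GammaSub hdvd hb₁) l)
      (zsmul_mem (cross3_mem_GammaSub hdvd ha₁) m))
    (smul_mem_GammaSub hd (dvd_dot3_cross3 hv hd ha₁ hb₁))
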